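/- arXiv:1607.00758 — 3 statements merged into one kernel-verified Lean document; each statement's English description precedes it below -/
import Mathlib

section
/- For the two-qubit operator C₂ = (H⊗H)·CZ, one has C₂³·(Z⊗I) = (I⊗Z)·C₂³ and C₂³·(X⊗I) = (I⊗X)·C₂³; that is, three applications of C₂ act as a mirror (swap) on Pauli operators of a 2-qubit state. -/
open Matrix Kronecker

noncomputable section

/-- Pauli X -/
def PX : Matrix (Fin 2) (Fin 2) ℂ := !![0, 1; 1, 0]
/-- Pauli Z -/
def PZ : Matrix (Fin 2) (Fin 2) ℂ := !![1, 0; 0, -1]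
/-- Hadamard -/
def Hg : Matrix (Fin 2) (Fin 2) ℂ := (((Real.sqrt 2 : ℝ) : ℂ))⁻¹ • !![1, 1; 1, -1]
/-- Controlled-Z: |0⟩⟨0|⊗I + |1⟩⟨1|⊗Z -/
def CZ : Matrix (Fin 2 × Fin 2) (Fin 2 × Fin 2) ℂ :=
  (Matrix.single 0 0 1) ⊗ₖ (1 : Matrix (Fin 2) (Fin 2) ℂ)
    + (Matrix.single 1 1 1) ⊗ₖ PZ
/-- CNOT: |0⟩⟨0|⊗I + |1⟩⟨1|⊗X -/
def CNOT : Matrix (Fin 2 × Fin 2) (Fin 2 × Fin 2) ℂ :=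
  (Matrix.single 0 0 1) ⊗ₖ (1 : Matrix (Fin 2) (Fin 2) ℂ)
    + (Matrix.single 1 1 1) ⊗ₖ PX
/-- R_Z(θ) = exp(-i(θ/2)Z) -/
def RZ (θ : ℝ) : Matrix (Fin 2) (Fin 2) ℂ :=
  NormedSpace.exp ((((-θ/2 : ℝ) : ℂ) * Complex.I) • PZ)
/-- R_X(θ) = exp(-i(θ/2)X) -/
def RX (θ : ℝ) : Matrix (Fin 2) (Fin 2) ℂ :=
  NormedSpace.exp ((((-θ/2 : ℝ) : ℂ) * Complex.I) • PX)
/-- R_{ZX}(α) = exp(-i(α/2) Z⊗X) -/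
def RZX (α : ℝ) : Matrix (Fin 2 × Fin 2) (Fin 2 × Fin 2) ℂ :=
  NormedSpace.exp ((((-α/2 : ℝ) : ℂ) * Complex.I) • (PZ ⊗ₖ PX))
/-- |+⟩ -/
def ketPlus : Fin 2 → ℂ := (((Real.sqrt 2 : ℝ) : ℂ))⁻¹ • (fun _ : Fin 2 => (1 : ℂ))
/-- |−⟩ -/
def ketMinus : Fin 2 → ℂ :=
  (((Real.sqrt 2 : ℝ) : ℂ))⁻¹ • (fun j : Fin 2 => if j = 0 then (1 : ℂ) else -1)
/-- Tensor product of single-qubit vectors -/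
def tens (u v : Fin 2 → ℂ) : Fin 2 × Fin 2 → ℂ := fun p => u p.1 * v p.2
/-- C₂ = (H⊗H)·CZ -/
def C2 : Matrix (Fin 2 × Fin 2) (Fin 2 × Fin 2) ℂ := (Hg ⊗ₖ Hg) * CZ

/-! Up to the factor `1/2`, `C₂` is the `±1` matrix `(H' ⊗ H') · CZ` with `H' = [[1, 1], [1, -1]]`,
whose cube is `8 · SWAP`. Hence `C₂³ = SWAP`, and conjugation by `SWAP` exchanges the two tensor
factors of any `A ⊗ B`. -/

theorem prodComm_toMatrix_mul_kronecker {R n : Type*} [CommSemiring R] [Fintype n]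
    [DecidableEq n] (A B : Matrix n n R) :
    (Equiv.prodComm n n).toPEquiv.toMatrix * (A ⊗ₖ B)
      = (B ⊗ₖ A) * (Equiv.prodComm n n).toPEquiv.toMatrix := by
  rw [PEquiv.toMatrix_toPEquiv_mul, PEquiv.mul_toMatrix_toPEquiv]
  ext
  simp [mul_comm]

def unnormalizedHadamard : Matrix (Fin 2) (Fin 2) ℂ := !![1, 1; 1, -1]

theorem Hg_kronecker_Hg :
    Hg ⊗ₖ Hg = (2⁻¹ : ℂ) • (unnormalizedHadamard ⊗ₖ unnormalizedHadamard) := by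
  have h : ((Real.sqrt 2 : ℝ) : ℂ)⁻¹ * ((Real.sqrt 2 : ℝ) : ℂ)⁻¹ = 2⁻¹ := by
    rw [← mul_inv, ← Complex.ofReal_mul, Real.mul_self_sqrt zero_le_two]
    norm_num
  rw [Hg, smul_kronecker, kronecker_smul, smul_smul, h, unnormalizedHadamard]

theorem C2_eq_smul :
    C2 = (2⁻¹ : ℂ) • ((unnormalizedHadamard ⊗ₖ unnormalizedHadamard) * CZ) := by
  rw [C2, Hg_kronecker_Hg, smul_mul_assoc]

theorem unnormalizedHadamard_kronecker_mul_CZ_pow_three :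
    ((unnormalizedHadamard ⊗ₖ unnormalizedHadamard) * CZ) ^ 3
      = (8 : ℂ) • (Equiv.prodComm (Fin 2) (Fin 2)).toPEquiv.toMatrix := by
  ext ⟨i, j⟩ ⟨k, l⟩
  fin_cases i <;> fin_cases j <;> fin_cases k <;> fin_cases l <;>
    norm_num [pow_three, unnormalizedHadamard, CZ, PZ, Matrix.mul_apply, Fintype.sum_prod_type,
      Fin.sum_univ_two, Matrix.one_apply, Matrix.single]

theorem C2_pow_three : C2 ^ 3 = (Equiv.prodComm (Fin 2) (Fin 2)).toPEquiv.toMatrix := by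
  rw [C2_eq_smul, smul_pow, unnormalizedHadamard_kronecker_mul_CZ_pow_three, smul_smul]
  norm_num

theorem c2_cubed_mirror :
    C2 ^ 3 * (PZ ⊗ₖ (1 : Matrix (Fin 2) (Fin 2) ℂ))
      = ((1 : Matrix (Fin 2) (Fin 2) ℂ) ⊗ₖ PZ) * C2 ^ 3 ∧
    C2 ^ 3 * (PX ⊗ₖ (1 : Matrix (Fin 2) (Fin 2) ℂ))
      = ((1 : Matrix (Fin 2) (Fin 2) ℂ) ⊗ₖ PX) * C2 ^ 3 := by
  rw [C2_pow_three]
  exact ⟨prodComm_toMatrix_mul_kronecker PZ 1, prodComm_toMatrix_mul_kronecker PX 1⟩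
end
end

section
/- For every n ≥ 1, the operator C_n = (⊗_{i=1}^n H_i)·(∏_{i=1}^{n−1} CZ_{i,i+1}) on n qubits satisfies the mirror relations C_n^{n+1}·Z_i·C_n^{−(n+1)} = Z_{n+1−i} and C_n^{n+1}·X_i·C_n^{−(n+1)} = X_{n+1−i} for all 1 ≤ i ≤ n, where Z_i (resp. X_i) denotes Pauli-Z (resp. X) acting on qubit i. -/
open Matrix Kronecker

noncomputable section

/-- Single-qubit operator `A` acting on qubit `i` of `n` qubits (identity elsewhere). -/
def op {n : ℕ} (i : Fin n) (A : Matrix (Fin 2) (Fin 2) ℂ) :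
    Matrix (Fin n → Fin 2) (Fin n → Fin 2) ℂ :=
  fun f g => ∏ j, if j = i then A (f j) (g j) else if f j = g j then 1 else 0

/-- ⊗_i H_i on n qubits. -/
def Hall (n : ℕ) : Matrix (Fin n → Fin 2) (Fin n → Fin 2) ℂ :=
  fun f g => ∏ j, Hg (f j) (g j)

/-- ∏_{i=1}^{n-1} CZ_{i,i+1} on n qubits (a diagonal matrix). -/
def CZall (n : ℕ) : Matrix (Fin n → Fin 2) (Fin n → Fin 2) ℂ :=
  Matrix.diagonal fun f => ∏ j : Fin n,
    if h : (j : ℕ) + 1 < n then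
      (if f j = 1 ∧ f ⟨(j : ℕ) + 1, h⟩ = 1 then (-1 : ℂ) else 1)
    else 1

/-- C_n = (⊗_i H_i)·(∏_i CZ_{i,i+1}) -/
def Cn (n : ℕ) : Matrix (Fin n → Fin 2) (Fin n → Fin 2) ℂ := Hall n * CZall n

/-!
Write `X^a Z^b` (`a b : 𝔽₂ⁿ`) for Pauli strings. Up to sign, the Hadamard layer swaps `a` and `b`,
and the CZ layer of the path sends `(a, b)` to `(a, b + Γa)`, `Γ` the adjacency matrix of the path;
so `C_n` sends `(a, b)` to `(b + Γa, a)`. Starting from `X_i = (e_i, 0)` the iterates are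
`(v (t + 1), v t)` with `v 0 = 0`, `v 1 = e_i`, `v (t + 2) = Γ v (t + 1) + v t`: a discrete wave
equation over `𝔽₂` on the path with zero boundary values at `-1` and `n`. The method of images
solves it by light cones issued from `i` and its mirror images, which gives `v n = e_{n-1-i}` and
`v (n + 1) = 0`, i.e. `C^n X_i C^{-n} = Z_{n-1-i}`; with `C Z_j C⁻¹ = X_j` both relations follow.
All signs are `+1` because `v t` lives on sites `j` with `j + i + t` odd: it is an independent set
of the path and is orthogonal to `v (t + 1)`.
-/

open scoped Fin.CommRing

def sgn (x : Fin 2) : ℂ := (-1) ^ (x : ℕ)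

lemma sgn_zero : sgn 0 = 1 := rfl

lemma sgn_add (x y : Fin 2) : sgn (x + y) = sgn x * sgn y := by
  fin_cases x <;> fin_cases y <;> norm_num [sgn]

lemma sgn_mul_self (x : Fin 2) : sgn x * sgn x = 1 := by
  rw [← sgn_add, CharTwo.add_self_eq_zero, sgn_zero]

lemma sgn_sum {ι : Type*} (s : Finset ι) (f : ι → Fin 2) :
    sgn (∑ k ∈ s, f k) = ∏ k ∈ s, sgn (f k) := by
  classical
  induction s using Finset.induction with
  | empty => rfl
  | insert a s h ih => rw [Finset.sum_insert h, Finset.prod_insert h, sgn_add, ih]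

lemma sgn_mul (x y : Fin 2) : sgn (x * y) = if x = 1 ∧ y = 1 then -1 else 1 := by
  fin_cases x <;> fin_cases y <;> norm_num [sgn]

/-- `pauli x z = X ^ x * Z ^ z`. -/
def pauli (x z : Fin 2) : Matrix (Fin 2) (Fin 2) ℂ :=
  of fun p q => if p = x + q then sgn (z * q) else 0

lemma pauli_zero_zero : pauli 0 0 = 1 := by
  ext p q; fin_cases p <;> fin_cases q <;> rfl

lemma pauli_one_zero : pauli 1 0 = PX := by
  ext p q; fin_cases p <;> fin_cases q <;> rfl

lemma pauli_zero_one : pauli 0 1 = PZ := by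
  ext p q; fin_cases p <;> fin_cases q <;> norm_num [pauli, PZ, sgn]

lemma Hg_mul_Hg : Hg * Hg = 1 := by
  have h : ((Real.sqrt 2 : ℝ) : ℂ)⁻¹ * ((Real.sqrt 2 : ℝ) : ℂ)⁻¹ = 2⁻¹ := by
    rw [← mul_inv, ← Complex.ofReal_mul, Real.mul_self_sqrt zero_le_two]; norm_num
  rw [Hg, smul_mul_smul, h]
  ext p q
  fin_cases p <;> fin_cases q <;> norm_num [mul_apply, Fin.sum_univ_two, one_apply]

lemma Hg_mul_pauli (x z : Fin 2) : Hg * pauli x z = sgn (x * z) • (pauli z x * Hg) := by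
  fin_cases x <;> fin_cases z <;> ext p q <;> fin_cases p <;> fin_cases q <;>
    simp [Hg, pauli, sgn, mul_apply, Fin.sum_univ_two]

section TensorPi
variable {ι R : Type*} [Fintype ι] [CommSemiring R] {α : ι → Type*}

def tensorPi (M : ∀ j, Matrix (α j) (α j) R) : Matrix (∀ j, α j) (∀ j, α j) R :=
  of fun f g => ∏ j, M j (f j) (g j)

lemma tensorPi_mul [DecidableEq ι] [∀ j, Fintype (α j)] (M N : ∀ j, Matrix (α j) (α j) R) :
    tensorPi M * tensorPi N = tensorPi fun j => M j * N j := by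
  ext f g
  simp only [tensorPi, mul_apply, of_apply, ← Finset.prod_mul_distrib]
  rw [Finset.prod_univ_sum, Fintype.piFinset_univ]

lemma tensorPi_smul (c : ι → R) (M : ∀ j, Matrix (α j) (α j) R) :
    tensorPi (fun j => c j • M j) = (∏ j, c j) • tensorPi M := by
  ext f g
  simp only [tensorPi, of_apply, Matrix.smul_apply, smul_eq_mul, Finset.prod_mul_distrib]

lemma tensorPi_one [∀ j, DecidableEq (α j)] :
    tensorPi (fun j => (1 : Matrix (α j) (α j) R)) = 1 := by
  ext f g
  by_cases h : f = g
  · subst h; simp [tensorPi, one_apply]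
  · obtain ⟨j, hj⟩ := Function.ne_iff.mp h
    rw [one_apply_ne h]
    exact Finset.prod_eq_zero (Finset.mem_univ j) (one_apply_ne hj)

end TensorPi

section PathGraph
variable {n : ℕ} {R : Type*}

/-- Extension by zero to `ℤ`, so that the neighbours `j ± 1` on the path need no case split. -/
def zeroExt [Zero R] (a : Fin n → R) (k : ℤ) : R :=
  if h : 0 ≤ k ∧ k < n then a ⟨k.toNat, by omega⟩ else 0

lemma zeroExt_natCast [Zero R] (a : Fin n → R) (j : Fin n) : zeroExt a j = a j := by
  rw [zeroExt, dif_pos ⟨by omega, by exact_mod_cast j.isLt⟩]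
  congr

lemma zeroExt_of_not_mem [Zero R] (a : Fin n → R) {k : ℤ} (hk : ¬(0 ≤ k ∧ k < n)) :
    zeroExt a k = 0 :=
  dif_neg hk

lemma zeroExt_neg_one [Zero R] (a : Fin n → R) : zeroExt a (-1) = 0 :=
  zeroExt_of_not_mem a (by omega)

lemma zeroExt_n [Zero R] (a : Fin n → R) : zeroExt a n = 0 :=
  zeroExt_of_not_mem a (by omega)

lemma zeroExt_add [AddZeroClass R] (a b : Fin n → R) (k : ℤ) :
    zeroExt (a + b) k = zeroExt a k + zeroExt b k := by
  unfold zeroExt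
  split_ifs <;> simp

lemma sum_zeroExt_sub_one_mul [NonUnitalNonAssocSemiring R] (a g : Fin n → R) :
    ∑ j : Fin n, zeroExt a (j - 1) * g j = ∑ j : Fin n, a j * zeroExt g (j + 1) := by
  let F : ℕ → R := fun k => zeroExt a ((k : ℤ) - 1) * zeroExt g k
  have hshift : ∑ k ∈ Finset.range n, F (k + 1) = ∑ k ∈ Finset.range n, F k := by
    have h := (Finset.sum_range_succ' F n).symm.trans (Finset.sum_range_succ F n)
    rwa [show F 0 = 0 by simp [F, zeroExt_neg_one], show F n = 0 by simp [F, zeroExt_n],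
      add_zero, add_zero] at h
  rw [← Fin.sum_univ_eq_sum_range, ← Fin.sum_univ_eq_sum_range] at hshift
  simpa only [F, Nat.cast_succ, add_sub_cancel_right, zeroExt_natCast] using hshift.symm

def edgeForm (a : Fin n → Fin 2) : Fin 2 := ∑ j : Fin n, a j * zeroExt a (j + 1)

def pathNbr (a : Fin n → Fin 2) : Fin n → Fin 2 :=
  fun j => zeroExt a (j - 1) + zeroExt a (j + 1)

lemma edgeForm_zero : edgeForm (0 : Fin n → Fin 2) = 0 := by
  simp [edgeForm]

lemma pathNbr_zero : pathNbr (0 : Fin n → Fin 2) = 0 := by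
  ext j; simp [pathNbr, zeroExt]

lemma edgeForm_add (a g : Fin n → Fin 2) :
    edgeForm (a + g) = edgeForm a + edgeForm g + pathNbr a ⬝ᵥ g := by
  simp only [edgeForm, dotProduct, pathNbr, zeroExt_add, Pi.add_apply, add_mul, mul_add,
    Finset.sum_add_distrib, sum_zeroExt_sub_one_mul]
  simp only [mul_comm (g _) (zeroExt a _)]
  abel

lemma dotProduct_pathNbr_self (a : Fin n → Fin 2) : a ⬝ᵥ pathNbr a = 0 := by
  simp only [dotProduct, pathNbr, mul_add, Finset.sum_add_distrib]
  rw [← sum_zeroExt_sub_one_mul]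
  simp only [mul_comm (a _), CharTwo.add_self_eq_zero]

end PathGraph

section PauliString
variable {n : ℕ}

def pauliString (a b : Fin n → Fin 2) : Matrix (Fin n → Fin 2) (Fin n → Fin 2) ℂ :=
  tensorPi fun j => pauli (a j) (b j)

lemma pauliString_apply (a b f g : Fin n → Fin 2) :
    pauliString a b f g = if f = a + g then sgn (b ⬝ᵥ g) else 0 := by
  split_ifs with h
  · subst h
    simp [pauliString, tensorPi, pauli, dotProduct, sgn_sum]
  · obtain ⟨j, hj⟩ := Function.ne_iff.mp h
    exact Finset.prod_eq_zero (Finset.mem_univ j) (if_neg hj)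

lemma op_eq_tensorPi (i : Fin n) (A : Matrix (Fin 2) (Fin 2) ℂ) :
    op i A = tensorPi (Function.update 1 i A) := by
  ext f g
  refine Finset.prod_congr rfl fun j _ => ?_
  by_cases h : j = i <;> simp [h, one_apply]

lemma op_PZ (i : Fin n) : op i PZ = pauliString 0 (Pi.single i 1) := by
  rw [op_eq_tensorPi, pauliString]
  congr 1
  ext1 j
  by_cases h : j = i
  · subst h; simp [pauli_zero_one]
  · simp [h, pauli_zero_zero]

lemma op_PX (i : Fin n) : op i PX = pauliString (Pi.single i 1) 0 := by
  rw [op_eq_tensorPi, pauliString]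
  congr 1
  ext1 j
  by_cases h : j = i
  · subst h; simp [pauli_one_zero]
  · simp [h, pauli_zero_zero]

lemma Hall_eq_tensorPi : Hall n = tensorPi fun _ => Hg := rfl

lemma Hall_mul_self : Hall n * Hall n = 1 := by
  simp only [Hall_eq_tensorPi, tensorPi_mul, Hg_mul_Hg, tensorPi_one]

lemma Hall_mul_pauliString (a b : Fin n → Fin 2) :
    Hall n * pauliString a b = sgn (a ⬝ᵥ b) • (pauliString b a * Hall n) := by
  simp only [Hall_eq_tensorPi, pauliString, tensorPi_mul, Hg_mul_pauli, tensorPi_smul,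
    dotProduct, sgn_sum]

lemma CZall_eq_diagonal : CZall n = diagonal fun f => sgn (edgeForm f) := by
  rw [CZall]
  congr 1
  ext1 f
  rw [edgeForm, sgn_sum]
  refine Finset.prod_congr rfl fun j _ => ?_
  by_cases h : (j : ℕ) + 1 < n
  · have hnext : zeroExt f ((j : ℤ) + 1) = f ⟨j + 1, h⟩ := by
      rw [← zeroExt_natCast f ⟨j + 1, h⟩]
      push_cast
      rfl
    rw [dif_pos h, sgn_mul, hnext]
  · rw [dif_neg h, zeroExt_of_not_mem f (by omega), mul_zero, sgn_zero]

lemma CZall_mul_self : CZall n * CZall n = 1 := by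
  simp only [CZall_eq_diagonal, diagonal_mul_diagonal, sgn_mul_self, diagonal_one]

lemma CZall_mul_pauliString (a b : Fin n → Fin 2) :
    CZall n * pauliString a b =
      sgn (edgeForm a) • (pauliString a (b + pathNbr a) * CZall n) := by
  ext f g
  rw [Matrix.smul_apply, CZall_eq_diagonal, diagonal_mul, mul_diagonal, pauliString_apply,
    pauliString_apply]
  split_ifs with h
  · subst h
    rw [edgeForm_add, add_dotProduct, sgn_add, sgn_add, sgn_add, smul_eq_mul]
    ring
  · simp

lemma Cn_mul_pauliString {a b : Fin n → Fin 2} (ha : edgeForm a = 0) (hab : a ⬝ᵥ b = 0) :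
    Cn n * pauliString a b = pauliString (b + pathNbr a) a * Cn n := by
  rw [Cn, mul_assoc, CZall_mul_pauliString, ha, sgn_zero, one_smul, ← mul_assoc,
    Hall_mul_pauliString, dotProduct_add, hab, dotProduct_pathNbr_self, add_zero, sgn_zero,
    one_smul, mul_assoc]

lemma isUnit_det_Cn : IsUnit (Cn n).det :=
  isUnit_det_of_right_inverse (B := CZall n * Hall n) <| by
    rw [Cn, mul_assoc, ← mul_assoc (CZall n), CZall_mul_self, one_mul, Hall_mul_self]

lemma semiconjBy_Cn_op_PZ (i : Fin n) : SemiconjBy (Cn n) (op i PZ) (op i PX) := by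
  rw [SemiconjBy, op_PZ, op_PX, Cn_mul_pauliString edgeForm_zero (zero_dotProduct _),
    pathNbr_zero, add_zero]

end PauliString

def lightCone (d : ℤ) (t : ℕ) : Fin 2 := if |d| < t ∧ Odd (d + t) then 1 else 0

lemma lightCone_add_two (d : ℤ) (t : ℕ) :
    lightCone d (t + 2) =
      lightCone (d - 1) (t + 1) + lightCone (d + 1) (t + 1) + lightCone d t := by
  simp only [lightCone, abs_lt, Int.odd_iff]
  split_ifs <;> omega

/-- Method of images for the walls at `-1` and `n`: the mirror images of the source `i` are
`-2 - i` and `2n - i`; for `t ≤ n + 1` no further image reaches `[-1, n]`. -/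
def reflectedCone (n i t : ℕ) (k : ℤ) : Fin 2 :=
  lightCone (k - i) t + lightCone (k + i + 2) t + lightCone (k + i - 2 * n) t

section ReflectedCone
variable {n i : ℕ}

lemma reflectedCone_add_two (t : ℕ) (k : ℤ) :
    reflectedCone n i (t + 2) k =
      reflectedCone n i (t + 1) (k - 1) + reflectedCone n i (t + 1) (k + 1) +
        reflectedCone n i t k := by
  simp only [reflectedCone, lightCone_add_two, sub_sub, add_sub_right_comm]
  ring_nf

lemma reflectedCone_of_even {t : ℕ} {k : ℤ} (h : Even (k + i + t)) :
    reflectedCone n i t k = 0 := by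
  simp only [reflectedCone, lightCone, abs_lt, Int.odd_iff, Int.even_iff] at h ⊢
  split_ifs <;> omega

lemma reflectedCone_at_neg_one (hi : i < n) {t : ℕ} (ht : t ≤ n + 1) :
    reflectedCone n i t (-1) = 0 := by
  simp only [reflectedCone, lightCone, abs_lt, Int.odd_iff]
  split_ifs <;> omega

lemma reflectedCone_at_n {t : ℕ} (ht : t ≤ n + 1) : reflectedCone n i t n = 0 := by
  simp only [reflectedCone, lightCone, abs_lt, Int.odd_iff]
  split_ifs <;> omega

lemma reflectedCone_time_zero (k : ℤ) : reflectedCone n i 0 k = 0 := by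
  simp only [reflectedCone, lightCone, abs_lt, Int.odd_iff]
  split_ifs <;> omega

lemma reflectedCone_time_one (hi : i < n) {k : ℤ} (hk0 : 0 ≤ k) (hk : k < n) :
    reflectedCone n i 1 k = if k = i then 1 else 0 := by
  simp only [reflectedCone, lightCone, abs_lt, Int.odd_iff]
  split_ifs <;> omega

lemma reflectedCone_time_n (hi : i < n) {k : ℤ} (hk0 : 0 ≤ k) (hk : k < n) :
    reflectedCone n i n k = if k + i + 1 = n then 1 else 0 := by
  simp only [reflectedCone, lightCone, abs_lt, Int.odd_iff]
  split_ifs <;> omega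

lemma reflectedCone_time_succ_n (hi : i < n) {k : ℤ} (hk0 : 0 ≤ k) (hk : k < n) :
    reflectedCone n i (n + 1) k = 0 := by
  simp only [reflectedCone, lightCone, abs_lt, Int.odd_iff]
  split_ifs <;> omega

end ReflectedCone

section MirrorSequence
variable {n : ℕ} (i : Fin n)

def mirrorSeq (t : ℕ) : Fin n → Fin 2 := fun j => reflectedCone n i t j

lemma zeroExt_mirrorSeq {t : ℕ} (ht : t ≤ n + 1) {k : ℤ} (hk₁ : -1 ≤ k) (hk₂ : k ≤ n) :
    zeroExt (mirrorSeq i t) k = reflectedCone n i t k := by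
  unfold zeroExt
  split_ifs with hk
  · simp only [mirrorSeq, Int.toNat_of_nonneg hk.1]
  · obtain rfl | rfl : k = -1 ∨ k = n := by omega
    · exact (reflectedCone_at_neg_one i.isLt ht).symm
    · exact (reflectedCone_at_n ht).symm

lemma mirrorSeq_add_two {t : ℕ} (ht : t ≤ n) :
    mirrorSeq i (t + 2) = pathNbr (mirrorSeq i (t + 1)) + mirrorSeq i t := by
  ext1 j
  rw [Pi.add_apply, pathNbr, zeroExt_mirrorSeq i (by omega) (by omega) (by omega),
    zeroExt_mirrorSeq i (by omega) (by omega) (by omega)]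
  exact reflectedCone_add_two t j

lemma edgeForm_mirrorSeq {t : ℕ} (ht : t ≤ n + 1) : edgeForm (mirrorSeq i t) = 0 := by
  refine Finset.sum_eq_zero fun j _ => ?_
  rw [zeroExt_mirrorSeq i ht (by omega) (by omega)]
  rcases Int.even_or_odd ((j : ℤ) + i + t) with h | h
  · rw [mirrorSeq, reflectedCone_of_even h, zero_mul]
  · have hnext : Even ((j : ℤ) + 1 + i + t) := by
      rw [Int.odd_iff] at h
      rw [Int.even_iff]
      omega
    rw [reflectedCone_of_even hnext, mul_zero]

lemma mirrorSeq_succ_dotProduct (t : ℕ) : mirrorSeq i (t + 1) ⬝ᵥ mirrorSeq i t = 0 := by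
  refine Finset.sum_eq_zero fun j _ => ?_
  rcases Int.even_or_odd ((j : ℤ) + i + t) with h | h
  · rw [mirrorSeq, mirrorSeq, reflectedCone_of_even h, mul_zero]
  · have hsucc : Even ((j : ℤ) + i + (t + 1 : ℕ)) := by
      rw [Int.odd_iff] at h
      rw [Int.even_iff]
      omega
    rw [mirrorSeq, reflectedCone_of_even hsucc, zero_mul]

lemma mirrorSeq_zero : mirrorSeq i 0 = 0 := by
  ext1 j
  exact reflectedCone_time_zero j

lemma mirrorSeq_one : mirrorSeq i 1 = Pi.single i 1 := by
  ext1 j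
  rw [mirrorSeq, reflectedCone_time_one i.isLt (by omega) (by omega), Pi.single_apply]
  simp [Fin.ext_iff]

lemma mirrorSeq_n : mirrorSeq i n = Pi.single i.rev 1 := by
  ext1 j
  have hrev : j = i.rev ↔ (j : ℤ) + i + 1 = n := by
    rw [Fin.ext_iff, Fin.val_rev]
    omega
  rw [mirrorSeq, reflectedCone_time_n i.isLt (by omega) (by omega), Pi.single_apply]
  simp only [hrev]

lemma mirrorSeq_succ_n : mirrorSeq i (n + 1) = 0 := by
  ext1 j
  exact reflectedCone_time_succ_n i.isLt (by omega) (by omega)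

lemma semiconjBy_Cn_mirrorString {t : ℕ} (ht : t + 1 ≤ n) :
    SemiconjBy (Cn n) (pauliString (mirrorSeq i (t + 1)) (mirrorSeq i t))
      (pauliString (mirrorSeq i (t + 2)) (mirrorSeq i (t + 1))) := by
  rw [SemiconjBy, Cn_mul_pauliString (edgeForm_mirrorSeq i (by omega))
    (mirrorSeq_succ_dotProduct i t), mirrorSeq_add_two i (by omega), add_comm]

lemma semiconjBy_Cn_pow_mirrorString {s : ℕ} (hs : s ≤ n) :
    SemiconjBy (Cn n ^ s) (pauliString (mirrorSeq i 1) (mirrorSeq i 0))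
      (pauliString (mirrorSeq i (s + 1)) (mirrorSeq i s)) := by
  induction s with
  | zero => simp
  | succ s ih =>
    rw [pow_succ']
    exact (semiconjBy_Cn_mirrorString i (by omega)).mul_left (ih (by omega))

lemma semiconjBy_Cn_pow_n_op_PX : SemiconjBy (Cn n ^ n) (op i PX) (op i.rev PZ) := by
  have h := semiconjBy_Cn_pow_mirrorString i le_rfl
  rwa [mirrorSeq_one, mirrorSeq_zero, mirrorSeq_succ_n, mirrorSeq_n, ← op_PX, ← op_PZ] at h

end MirrorSequence

lemma SemiconjBy.mul_nonsing_inv_eq {m α : Type*} [Fintype m] [DecidableEq m] [CommRing α]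
    {A M N : Matrix m m α} (h : SemiconjBy A M N) (hA : IsUnit A.det) : A * M * A⁻¹ = N := by
  rw [h.eq, mul_nonsing_inv_cancel_right _ _ hA]

theorem cn_mirror_general (n : ℕ) (i : Fin n) :
    Cn n ^ (n + 1) * op i PZ * (Cn n ^ (n + 1))⁻¹ = op i.rev PZ ∧
    Cn n ^ (n + 1) * op i PX * (Cn n ^ (n + 1))⁻¹ = op i.rev PX := by
  have hdet : IsUnit (Cn n ^ (n + 1)).det := by
    rw [det_pow]
    exact isUnit_det_Cn.pow _
  constructor
  · rw [pow_succ] at hdet ⊢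
    exact ((semiconjBy_Cn_pow_n_op_PX i).mul_left (semiconjBy_Cn_op_PZ i)).mul_nonsing_inv_eq
      hdet
  · rw [pow_succ'] at hdet ⊢
    exact ((semiconjBy_Cn_op_PZ i.rev).mul_left (semiconjBy_Cn_pow_n_op_PX i)).mul_nonsing_inv_eq
      hdet

theorem cn_mirror (n : ℕ) (hn : 1 ≤ n) (i : Fin n) :
    Cn n ^ (n + 1) * op i PZ * (Cn n ^ (n + 1))⁻¹ = op i.rev PZ ∧
    Cn n ^ (n + 1) * op i PX * (Cn n ^ (n + 1))⁻¹ = op i.rev PX :=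
  cn_mirror_general n i
end
end

section
/- For any single-qubit state |ψ⟩ and any angle θ, measuring the first qubit of CZ(|ψ⟩⊗|+⟩) in the basis {|+_θ⟩, |−_θ⟩} with outcome m leaves the second qubit in the state X^m·H·R_Z(θ)|ψ⟩ up to normalization and global phase: (⟨m|·H·R_Z(θ) ⊗ I)·CZ·(|ψ⟩⊗|+⟩) = (1/√2)·X^m·H·R_Z(θ)|ψ⟩. -/
open Matrix Kronecker

noncomputable section

/-! In `CZ (ψ ⊗ |+⟩)` the amplitude at `(a, j)` is `ψ a (-1)^(a j) / √2`, which is symmetric in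
the two indices: the branch with second qubit `j` is `Z^j ψ / √2` on the first qubit. Hence the
outcome `m` leaves `j ↦ (H R_Z(θ) Z^j ψ)_m / √2`; as `R_Z(θ)` commutes with `Z` and `H Z = X H`,
this is `(X^j H R_Z(θ) ψ)_m / √2 = (X^m H R_Z(θ) ψ)_j / √2`. -/

theorem Matrix.kronecker_one_mulVec_apply {R l m n : Type*} [CommSemiring R] [Fintype m]
    [Fintype n] [DecidableEq n] (A : Matrix l m R) (v : m × n → R) (i : l) (j : n) :
    ((A ⊗ₖ (1 : Matrix n n R)) *ᵥ v) (i, j) = (A *ᵥ fun a => v (a, j)) i := by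
  simp [mulVec, dotProduct, Fintype.sum_prod_type, one_apply]

theorem PZ_pow_mulVec_apply (k : Fin 2) (v : Fin 2 → ℂ) (i : Fin 2) :
    (PZ ^ (k : ℕ) *ᵥ v) i = (-1) ^ ((i : ℕ) * k) * v i := by
  fin_cases k <;> fin_cases i <;> simp [PZ, mulVec, dotProduct]

theorem PX_pow_mulVec_apply (k : Fin 2) (v : Fin 2 → ℂ) (i : Fin 2) :
    (PX ^ (k : ℕ) *ᵥ v) i = v (i + k) := by
  fin_cases k <;> fin_cases i <;> simp [PX, mulVec, dotProduct]

theorem CZ_mulVec_tens (ψ φ : Fin 2 → ℂ) (a j : Fin 2) :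
    (CZ *ᵥ tens ψ φ) (a, j) = ψ a * (PZ ^ (a : ℕ) *ᵥ φ) j := by
  fin_cases a <;> fin_cases j <;>
    simp [CZ, PZ, tens, mulVec, dotProduct, Fintype.sum_prod_type, one_apply, single_apply]

theorem CZ_mulVec_tens_ketPlus (ψ : Fin 2 → ℂ) (j : Fin 2) :
    (fun a => (CZ *ᵥ tens ψ ketPlus) (a, j)) = ((Real.sqrt 2 : ℝ) : ℂ)⁻¹ • (PZ ^ (j : ℕ) *ᵥ ψ) := by
  funext a
  rw [Pi.smul_apply, CZ_mulVec_tens, PZ_pow_mulVec_apply, PZ_pow_mulVec_apply, ketPlus,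
    mul_comm (j : ℕ)]
  simp only [Pi.smul_apply, smul_eq_mul]
  ring

theorem commute_RZ_PZ (θ : ℝ) : Commute (RZ θ) PZ :=
  ((Commute.refl PZ).smul_left _).exp_left

theorem Hg_mul_PZ : Hg * PZ = PX * Hg := by
  ext i j
  fin_cases i <;> fin_cases j <;> simp [Hg, PZ, PX]

theorem Hg_mul_RZ_mul_PZ_pow (θ : ℝ) (k : ℕ) : Hg * RZ θ * PZ ^ k = PX ^ k * (Hg * RZ θ) := by
  have hH : SemiconjBy Hg (PZ ^ k) (PX ^ k) := SemiconjBy.pow_right Hg_mul_PZ k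
  rw [mul_assoc, ((commute_RZ_PZ θ).pow_right k).eq, ← mul_assoc, hH.eq, mul_assoc]

theorem generalized_one_bit_teleportation (ψ : Fin 2 → ℂ) (θ : ℝ) (m : Fin 2) :
    (fun j => (((Hg * RZ θ) ⊗ₖ (1 : Matrix (Fin 2) (Fin 2) ℂ)) * CZ).mulVec
        (tens ψ ketPlus) (m, j))
      = (((Real.sqrt 2 : ℝ) : ℂ))⁻¹ • (PX ^ (m : ℕ) * Hg * RZ θ).mulVec ψ := by
  funext j
  rw [← mulVec_mulVec, kronecker_one_mulVec_apply, CZ_mulVec_tens_ketPlus, mulVec_smul,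
    mulVec_mulVec, Hg_mul_RZ_mul_PZ_pow, mul_assoc]
  simp only [← mulVec_mulVec, Pi.smul_apply, PX_pow_mulVec_apply, add_comm]
end
end
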